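/- arXiv:2409.15133 — 2 statements merged into one kernel-verified Lean document; each statement's English description precedes it below -/
import Mathlib

section
/- If σ is a ranking that is NOT ideal (some irrelevant document precedes some relevant one), then there exist adjacent positions i, i+1 with σ(i) ∉ R and σ(i+1) ∈ R, and swapping them strictly increases precision at k for k = i+1 while not decreasing it for any other k. -/
/-- Precision at `k`. -/
def precAt {D : Type*} [Fintype D] [DecidableEq D] (R : Finset D)
    (σ : Fin (Fintype.card D) ≃ D) (k : ℕ) : ℚ :=
  ((Finset.univ.filter fun i : Fin (Fintype.card D) => (i : ℕ) < k ∧ σ i ∈ R).card : ℚ) / k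

/-- A non-ideal ranking has an adjacent irrelevant–relevant pair; swapping these two
positions strictly increases precision at `k = i+1` and never decreases precision. -/
theorem stmt_8 {D : Type*} [Fintype D] [DecidableEq D] (R : Finset D)
    (σ : Fin (Fintype.card D) ≃ D)
    (hnotideal : ¬ ∀ i j : Fin (Fintype.card D), σ i ∈ R → σ j ∉ R → i < j) :
    ∃ i j : Fin (Fintype.card D), (j : ℕ) = (i : ℕ) + 1 ∧ σ i ∉ R ∧ σ j ∈ R ∧
      precAt R σ ((i : ℕ) + 1) < precAt R ((Equiv.swap i j).trans σ) ((i : ℕ) + 1) ∧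
      ∀ k : ℕ, precAt R σ k ≤ precAt R ((Equiv.swap i j).trans σ) k := by
  classical
  push_neg at hnotideal
  obtain ⟨a, b, ha, hb, hab⟩ := hnotideal
  have hba : b < a := lt_of_le_of_ne hab (fun h => hb (h ▸ ha))
  have hQ : ∃ n, (b : ℕ) < n ∧ ∃ h : n < Fintype.card D, σ ⟨n, h⟩ ∈ R :=
    ⟨(a : ℕ), hba, a.isLt, by simpa using ha⟩
  set t := Nat.find hQ with htdef
  obtain ⟨hbt, htc, htR⟩ := Nat.find_spec hQ
  have ht1 : 1 ≤ t := Nat.one_le_iff_ne_zero.mpr (by omega)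
  have hmc : t - 1 < Fintype.card D := by omega
  set i : Fin (Fintype.card D) := ⟨t - 1, hmc⟩ with hidef
  set j : Fin (Fintype.card D) := ⟨t, htc⟩ with hjdef
  have hji : (j : ℕ) = (i : ℕ) + 1 := by simp [hidef, hjdef]; omega
  have hiR : σ i ∉ R := by
    rcases eq_or_lt_of_le (by omega : (b : ℕ) ≤ t - 1) with h | h
    · have : i = b := by apply Fin.ext; simp [hidef]; omega
      rw [this]; exact hb
    · intro hmem
      exact Nat.find_min hQ (by omega : t - 1 < t) ⟨h, hmc, hmem⟩
  have hij : i < j := by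
    rw [Fin.lt_iff_val_lt_val]; omega
  have hine : i ≠ j := ne_of_lt hij
  -- card bijection lemma
  have key : ∀ k : ℕ,
      (Finset.univ.filter fun p : Fin (Fintype.card D) =>
        (p : ℕ) < k ∧ σ ((Equiv.swap i j) p) ∈ R).card
      = (Finset.univ.filter fun q : Fin (Fintype.card D) =>
        (((Equiv.swap i j) q : Fin (Fintype.card D)) : ℕ) < k ∧ σ q ∈ R).card := by
    intro k
    apply Finset.card_bij' (fun p _ => Equiv.swap i j p) (fun q _ => Equiv.swap i j q)
    · intro p hp
      simp only [Finset.mem_filter, Finset.mem_univ, true_and, Equiv.swap_apply_self] at hp ⊢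
      exact ⟨hp.1, hp.2⟩
    · intro q hq
      simp only [Finset.mem_filter, Finset.mem_univ, true_and, Equiv.swap_apply_self] at hq ⊢
      exact ⟨hq.1, hq.2⟩
    · intro p _; simp
    · intro q _; simp
  have hsub : ∀ k : ℕ,
      (Finset.univ.filter fun q : Fin (Fintype.card D) => (q : ℕ) < k ∧ σ q ∈ R)
      ⊆ (Finset.univ.filter fun q : Fin (Fintype.card D) =>
        (((Equiv.swap i j) q : Fin (Fintype.card D)) : ℕ) < k ∧ σ q ∈ R) := by
    intro k q hq
    simp only [Finset.mem_filter, Finset.mem_univ, true_and] at hq ⊢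
    refine ⟨?_, hq.2⟩
    by_cases hqi : q = i
    · exact absurd (hqi ▸ hq.2) hiR
    by_cases hqj : q = j
    · subst hqj
      rw [Equiv.swap_apply_right]
      have := hq.1
      omega
    · rw [Equiv.swap_apply_of_ne_of_ne hqi hqj]
      exact hq.1
  have hprec : ∀ k : ℕ, precAt R ((Equiv.swap i j).trans σ) k
      = ((Finset.univ.filter fun q : Fin (Fintype.card D) =>
        (((Equiv.swap i j) q : Fin (Fintype.card D)) : ℕ) < k ∧ σ q ∈ R).card : ℚ) / k := by
    intro k
    unfold precAt
    rw [show (Finset.univ.filter fun p : Fin (Fintype.card D) =>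
        (p : ℕ) < k ∧ ((Equiv.swap i j).trans σ) p ∈ R)
      = (Finset.univ.filter fun p : Fin (Fintype.card D) =>
        (p : ℕ) < k ∧ σ ((Equiv.swap i j) p) ∈ R) from rfl, key k]
  refine ⟨i, j, hji, hiR, htR, ?_, ?_⟩
  · rw [hprec]
    unfold precAt
    have hc : (0 : ℚ) < (((i : ℕ) + 1 : ℕ) : ℚ) := by positivity
    rw [div_lt_div_iff_of_pos_right hc]
    have hlt : (Finset.univ.filter fun q : Fin (Fintype.card D) =>
          (q : ℕ) < (i : ℕ) + 1 ∧ σ q ∈ R).card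
        < (Finset.univ.filter fun q : Fin (Fintype.card D) =>
          (((Equiv.swap i j) q : Fin (Fintype.card D)) : ℕ) < (i : ℕ) + 1 ∧ σ q ∈ R).card := by
      apply Finset.card_lt_card
      rw [Finset.ssubset_iff_of_subset (hsub _)]
      refine ⟨j, ?_, ?_⟩
      · simp only [Finset.mem_filter, Finset.mem_univ, true_and, Equiv.swap_apply_right]
        exact ⟨by omega, htR⟩
      · simp only [Finset.mem_filter, Finset.mem_univ, true_and, not_and]
        intro h; omega
    exact_mod_cast hlt
  · intro k
    rw [hprec]
    unfold precAt
    rcases Nat.eq_zero_or_pos k with hk | hk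
    · simp [hk]
    · have hc : (0 : ℚ) < (k : ℚ) := by positivity
      rw [div_le_div_iff_of_pos_right hc]
      exact_mod_cast Finset.card_le_card (hsub k)
end

section
/- Swapping an adjacent irrelevant-relevant pair strictly increases average precision: if σ(i) ∉ R and σ(i+1) ∈ R, and σ' = σ ∘ (i, i+1), then AP(σ') > AP(σ). -/
/-- Average precision. -/
def avgPrec {D : Type*} [Fintype D] [DecidableEq D] (R : Finset D)
    (σ : Fin (Fintype.card D) ≃ D) : ℚ :=
  (1 / (R.card : ℚ)) *
    ∑ i ∈ Finset.univ.filter (fun i : Fin (Fintype.card D) => σ i ∈ R),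
      ((Finset.univ.filter fun j : Fin (Fintype.card D) =>
          (j : ℕ) ≤ (i : ℕ) ∧ σ j ∈ R).card : ℚ) / ((i : ℕ) + 1)

lemma stmt9_key {D : Type*} [DecidableEq D] {n : ℕ} (R : Finset D) (hR : 0 < R.card)
    (f g : Fin n → D) (i j : Fin n) (hij : (j : ℕ) = (i : ℕ) + 1)
    (hi : f i ∉ R) (hj : f j ∈ R)
    (hgi : g i = f j) (hgj : g j = f i)
    (hgk : ∀ k : Fin n, k ≠ i → k ≠ j → g k = f k) :
    (1 / (R.card : ℚ)) *
      ∑ k ∈ Finset.univ.filter (fun k : Fin n => f k ∈ R),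
        ((Finset.univ.filter fun m : Fin n => (m : ℕ) ≤ (k : ℕ) ∧ f m ∈ R).card : ℚ) / ((k : ℕ) + 1)
    < (1 / (R.card : ℚ)) *
      ∑ k ∈ Finset.univ.filter (fun k : Fin n => g k ∈ R),
        ((Finset.univ.filter fun m : Fin n => (m : ℕ) ≤ (k : ℕ) ∧ g m ∈ R).card : ℚ) / ((k : ℕ) + 1) := by
  classical
  have hne : i ≠ j := fun h => by rw [h] at hij; omega
  set cnt : (Fin n → D) → Fin n → ℕ := fun ρ k =>
    (Finset.univ.filter fun m : Fin n => (m : ℕ) ≤ (k : ℕ) ∧ ρ m ∈ R).card with hcnt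
  set B : Finset (Fin n) :=
    Finset.univ.filter (fun m : Fin n => (m : ℕ) ≤ (i : ℕ) ∧ f m ∈ R) with hB
  have hiB : i ∉ B := by simp [hB, hi]
  have hjB : j ∉ B := by simp [hB]; intro h; omega
  have cntA : ∀ k : Fin n, k ≠ i → k ≠ j → cnt g k = cnt f k := by
    intro k h1 h2
    have hk1 : (k : ℕ) ≠ (i : ℕ) := fun h => h1 (Fin.ext h)
    have hk2 : (k : ℕ) ≠ (j : ℕ) := fun h => h2 (Fin.ext h)
    by_cases hlt : (k : ℕ) < (i : ℕ)
    · simp only [hcnt]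
      congr 1
      ext m
      simp only [Finset.mem_filter, Finset.mem_univ, true_and]
      constructor <;> rintro ⟨hm, hm2⟩ <;> refine ⟨hm, ?_⟩
      · rwa [hgk m (fun h => by rw [h] at hm; omega) (fun h => by rw [h] at hm; omega)] at hm2
      · rwa [hgk m (fun h => by rw [h] at hm; omega) (fun h => by rw [h] at hm; omega)]
    · have hik : (i : ℕ) ≤ (k : ℕ) := by omega
      have hjk : (j : ℕ) ≤ (k : ℕ) := by omega
      have hset : Finset.univ.filter (fun m : Fin n => (m : ℕ) ≤ (k : ℕ) ∧ g m ∈ R) =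
          insert i ((Finset.univ.filter (fun m : Fin n => (m : ℕ) ≤ (k : ℕ) ∧ f m ∈ R)).erase j) := by
        ext m
        simp only [Finset.mem_filter, Finset.mem_univ, true_and, Finset.mem_insert,
          Finset.mem_erase]
        by_cases hmi : m = i
        · subst hmi
          simp [hgi, hj, hik]
        · by_cases hmj : m = j
          · subst hmj
            simp [hgj, hi, hne]
            intro h; exact absurd h.symm hne
          · simp [hgk m hmi hmj, hmi, hmj]
      have hjmem : j ∈ Finset.univ.filter (fun m : Fin n => (m : ℕ) ≤ (k : ℕ) ∧ f m ∈ R) := by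
        simp only [Finset.mem_filter, Finset.mem_univ, true_and]
        exact ⟨hjk, hj⟩
      have himem : i ∉ (Finset.univ.filter (fun m : Fin n => (m : ℕ) ≤ (k : ℕ) ∧ f m ∈ R)).erase j := by
        simp [hi]
      simp only [hcnt]
      rw [hset, Finset.card_insert_of_notMem himem, Finset.card_erase_of_mem hjmem]
      have := Finset.card_pos.mpr ⟨j, hjmem⟩
      omega
  have cntBi : cnt g i = B.card + 1 := by
    have hset : Finset.univ.filter (fun m : Fin n => (m : ℕ) ≤ (i : ℕ) ∧ g m ∈ R) = insert i B := by
      ext m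
      simp only [hB, Finset.mem_filter, Finset.mem_univ, true_and, Finset.mem_insert]
      by_cases hmi : m = i
      · subst hmi; simp [hgi, hj]
      · by_cases hmle : (m : ℕ) ≤ (i : ℕ)
        · have hmj : m ≠ j := fun h => by rw [h] at hmle; omega
          simp [hgk m hmi hmj, hmi, hmle]
        · simp [hmle, hmi]
    simp only [hcnt]
    rw [hset, Finset.card_insert_of_notMem hiB]
  have cntBj : cnt f j = B.card + 1 := by
    have hset : Finset.univ.filter (fun m : Fin n => (m : ℕ) ≤ (j : ℕ) ∧ f m ∈ R) = insert j B := by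
      ext m
      simp only [hB, Finset.mem_filter, Finset.mem_univ, true_and, Finset.mem_insert]
      by_cases hmj : m = j
      · subst hmj; simp [hj]
      · have hmne : (m : ℕ) ≠ (j : ℕ) := fun h => hmj (Fin.ext h)
        have : ((m : ℕ) ≤ (j : ℕ)) ↔ ((m : ℕ) ≤ (i : ℕ)) := by omega
        simp [this, hmj]
    simp only [hcnt]
    rw [hset, Finset.card_insert_of_notMem hjB]
  have hr : (0 : ℚ) < 1 / (R.card : ℚ) := by
    have : (0 : ℚ) < (R.card : ℚ) := by exact_mod_cast hR
    positivity
  apply mul_lt_mul_of_pos_left _ hr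
  rw [Finset.sum_filter, Finset.sum_filter]
  have split : ∀ h : Fin n → ℚ, ∑ k : Fin n, h k
      = h i + h j + ∑ k ∈ (Finset.univ.erase i).erase j, h k := by
    intro h
    rw [← Finset.add_sum_erase _ h (Finset.mem_univ i),
      ← Finset.add_sum_erase _ h (Finset.mem_erase.mpr ⟨Ne.symm hne, Finset.mem_univ j⟩)]
    ring
  rw [split, split]
  have hrest : ∑ k ∈ (Finset.univ.erase i).erase j,
      (if g k ∈ R then (cnt g k : ℚ) / ((k : ℕ) + 1) else 0)
      = ∑ k ∈ (Finset.univ.erase i).erase j,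
      (if f k ∈ R then (cnt f k : ℚ) / ((k : ℕ) + 1) else 0) := by
    apply Finset.sum_congr rfl
    intro k hk
    simp only [Finset.mem_erase] at hk
    rw [hgk k hk.2.1 hk.1, cntA k hk.2.1 hk.1]
  rw [hrest]
  have e1 : (if f i ∈ R then (cnt f i : ℚ) / ((i : ℕ) + 1) else 0) = 0 := by simp [hi]
  have e2 : (if g j ∈ R then (cnt g j : ℚ) / ((j : ℕ) + 1) else 0) = 0 := by simp [hgj, hi]
  have e3 : (if g i ∈ R then (cnt g i : ℚ) / ((i : ℕ) + 1) else 0)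
      = ((B.card : ℚ) + 1) / ((i : ℕ) + 1) := by
    rw [if_pos (by rw [hgi]; exact hj), cntBi]; push_cast; ring
  have e4 : (if f j ∈ R then (cnt f j : ℚ) / ((j : ℕ) + 1) else 0)
      = ((B.card : ℚ) + 1) / ((i : ℕ) + 2) := by
    rw [if_pos hj, cntBj, hij]; push_cast; ring
  rw [e1, e2, e3, e4]
  have hc : (0 : ℚ) < (B.card : ℚ) + 1 := by
    have : (0 : ℚ) ≤ (B.card : ℚ) := Nat.cast_nonneg _
    linarith
  have hlt : ((B.card : ℚ) + 1) / ((i : ℕ) + 2) < ((B.card : ℚ) + 1) / ((i : ℕ) + 1) := by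
    apply div_lt_div_of_pos_left hc (by positivity)
    linarith
  linarith

/-- Swapping an adjacent irrelevant–relevant pair strictly increases average precision. -/
theorem stmt_9 {D : Type*} [Fintype D] [DecidableEq D] (R : Finset D)
    (hR : R.Nonempty) (σ : Fin (Fintype.card D) ≃ D)
    (i j : Fin (Fintype.card D)) (hij : (j : ℕ) = (i : ℕ) + 1)
    (hi : σ i ∉ R) (hj : σ j ∈ R) :
    avgPrec R σ < avgPrec R ((Equiv.swap i j).trans σ) := by
  have hne : i ≠ j := fun h => by rw [h] at hij; omega
  refine stmt9_key R (Finset.card_pos.mpr hR) σ ((Equiv.swap i j).trans σ) i j hij hi hj ?_ ?_ ?_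
  · simp [Equiv.swap_apply_left]
  · simp [Equiv.swap_apply_right]
  · intro k h1 h2
    simp [Equiv.swap_apply_of_ne_of_ne h1 h2]
end
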